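/- The sequence QEC(K_n ⋆ K_2) = -2/(2 + √(2(1 - 1/n))) for n ≥ 2 is strictly increasing in n and converges to QEC(P_4) = -(2 - √2) as n → ∞; moreover QEC(K_n ⋆ K_2) < -(2 - √2) for all n ≥ 2. -/
import Mathlib


open Filter

lemma qec_key : ∀ x y : ℝ, 0 ≤ x → x < y → -2 / (2 + Real.sqrt x) < -2 / (2 + Real.sqrt y) := by
  intro x y hx hxy
  have h1 : Real.sqrt x < Real.sqrt y := Real.sqrt_lt_sqrt hx hxy
  have h2 : (0:ℝ) ≤ Real.sqrt x := Real.sqrt_nonneg x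
  have h3 : (0:ℝ) < 2 + Real.sqrt x := by linarith
  have h4 : (0:ℝ) < 2 + Real.sqrt y := by linarith
  rw [div_lt_div_iff₀ h3 h4]
  nlinarith

lemma qec_lim : -2 / (2 + Real.sqrt 2) = -(2 - Real.sqrt 2) := by
  have h : Real.sqrt 2 ^ 2 = 2 := Real.sq_sqrt (by norm_num)
  have h2 : (0:ℝ) < 2 + Real.sqrt 2 := by positivity
  field_simp
  nlinarith

/-- the sequence QEC(K_n ⋆ K_2) = -2/(2 + √(2(1 - 1/n))) is strictly
increasing for n ≥ 2, converges to QEC(P_4) = -(2 - √2), and is < -(2 - √2) for all n ≥ 2. -/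
theorem qec_Kn_star_K2_monotone (a : ℕ → ℝ)
    (ha : ∀ n : ℕ, a n = -2 / (2 + Real.sqrt (2 * (1 - 1/(n : ℝ))))) :
    (∀ m n : ℕ, 2 ≤ m → m < n → a m < a n) ∧
    Tendsto a atTop (nhds (-(2 - Real.sqrt 2))) ∧
    (∀ n : ℕ, 2 ≤ n → a n < -(2 - Real.sqrt 2)) := by
  refine ⟨?_, ?_, ?_⟩
  · intro m n hm hmn
    rw [ha m, ha n]
    apply qec_key
    · have : (1:ℝ)/m ≤ 1 := by
        rw [div_le_one (by exact_mod_cast (by omega : 0 < m) : (0:ℝ) < m)]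
        exact_mod_cast (by omega : 1 ≤ m)
      nlinarith
    · have hm0 : (0:ℝ) < m := by exact_mod_cast (by omega : 0 < m)
      have : (1:ℝ)/n < 1/m := by
        apply one_div_lt_one_div_of_lt hm0
        exact_mod_cast hmn
      nlinarith
  · have h1 : Tendsto (fun n : ℕ => (1:ℝ)/n) atTop (nhds 0) :=
      tendsto_one_div_atTop_nhds_zero_nat
    have h2 : Tendsto (fun n : ℕ => 2 * (1 - 1/(n:ℝ))) atTop (nhds 2) := by
      have := ((tendsto_const_nhds (x := (1:ℝ))).sub h1).const_mul (2:ℝ)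
      simpa using this
    have h3 : Tendsto (fun n : ℕ => Real.sqrt (2 * (1 - 1/(n:ℝ)))) atTop
        (nhds (Real.sqrt 2)) := (Real.continuous_sqrt.tendsto 2).comp h2
    have h4 : Tendsto (fun n : ℕ => 2 + Real.sqrt (2 * (1 - 1/(n:ℝ)))) atTop
        (nhds (2 + Real.sqrt 2)) := tendsto_const_nhds.add h3
    have h5 : Tendsto (fun n : ℕ => -2 / (2 + Real.sqrt (2 * (1 - 1/(n:ℝ))))) atTop
        (nhds (-2 / (2 + Real.sqrt 2))) :=
      tendsto_const_nhds.div h4 (by positivity)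
    rw [← qec_lim]
    simpa [ha] using h5.congr (fun n => (ha n).symm)
  · intro n hn
    rw [ha n, ← qec_lim]
    apply qec_key
    · have : (1:ℝ)/n ≤ 1 := by
        rw [div_le_one (by exact_mod_cast (by omega : 0 < n) : (0:ℝ) < n)]
        exact_mod_cast (by omega : 1 ≤ n)
      nlinarith
    · have hn0 : (0:ℝ) < n := by exact_mod_cast (by omega : 0 < n)
      have : (0:ℝ) < 1/n := by positivity
      nlinarith
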